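/- Let H be a complex Hilbert space, let T be a bounded self-adjoint operator on H, and fix real numbers a > 0 with a·‖T‖² < 1, c ≥ 0, b > 0 and k > 0. Then for every λ on the contour σ — i.e., λ = −t + i with t ∈ (−∞,−a], or λ = a − ti with t ∈ [−1,1], or λ = t − i with t ∈ [a,∞) — the operator λ·T² − 1 is invertible, and the operator-valued function λ ↦ T² (λT² − 1)^{−1} λ^c exp(−bλ^k) is Bochner integrable along each of the three parametrized pieces of σ; in particular the integral of its operator norm over each piece is finite. -/

import Mathlib

/-!
Because `T` is self-adjoint, `T²` is a positive operator, so `⟪x, (λT² - 1)x⟫ = λ‖Tx‖² - ‖x‖²`.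
For `Im λ ≠ 0` its imaginary part controls `‖Tx‖²` and then its modulus controls `‖x‖²`, which
gives `‖(λT² - 1)⁻¹‖ ≤ 1 + |λ| / |Im λ|`; at the one real point `λ = a` of the contour the
Neumann series converges because `a‖T‖² < 1`. Hence the integrand is continuous along `σ`, and
on the horizontal rays `λ = t ± i` we have `arg λ → 0`, so `Re λ^k ≥ t^k / 2` eventually and the
integrand is `O(t^(|c|+1) exp(-(b/2) t^k))`, which is integrable at infinity.
-/

open MeasureTheory Complex

/-- The integrand `λ ↦ T² (λT² - 1)⁻¹ λ^c exp (-b λ^k)` of the paper's Lemma C.2,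
with principal-branch complex powers. -/
noncomputable def contourIntegrand {H : Type*} [NormedAddCommGroup H]
    [InnerProductSpace ℂ H] [CompleteSpace H]
    (T : H →L[ℂ] H) (c b k : ℝ) (l : ℂ) : H →L[ℂ] H :=
  (l ^ (c : ℂ) * Complex.exp (-(b : ℂ) * l ^ (k : ℂ))) •
    (T ^ 2 * Ring.inverse (l • T ^ 2 - 1))

open Filter Topology Asymptotics

theorem isUnit_smul_sub_one_of_norm_mul_lt {𝕜 A : Type*} [NormedField 𝕜]
    [NormedRing A] [NormedAlgebra 𝕜 A] [CompleteSpace A] {S : A} {l : 𝕜}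
    (h : ‖l‖ * ‖S‖ < 1) : IsUnit (l • S - 1) := by
  simpa using (isUnit_one_sub_of_norm_lt_one ((norm_smul_le l S).trans_lt h)).neg

theorem IsSelfAdjoint.isUnit_smul_sub_one_of_im_ne_zero {A : Type*} [CStarAlgebra A] {S : A}
    (hS : IsSelfAdjoint S) {l : ℂ} (hl : l.im ≠ 0) : IsUnit (l • S - 1) := by
  have hl0 : l ≠ 0 := by rintro rfl; simp at hl
  have hinv : l⁻¹ ∉ spectrum ℂ S := fun h => hl <| by
    simpa [hl0] using hS.im_eq_zero_of_mem_spectrum h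
  convert ((neg_ne_zero.mpr hl0).isUnit.map (algebraMap ℂ A)).mul
    (spectrum.notMem_iff.mp hinv) using 1
  rw [mul_sub, ← map_mul, ← Algebra.smul_def, neg_mul, mul_inv_cancel₀ hl0, map_neg, map_one]
  simp [sub_eq_neg_add, add_comm]

namespace ContinuousLinearMap

theorem norm_ring_inverse_le_of_norm_le_mul_norm_apply {𝕜 E : Type*}
    [NontriviallyNormedField 𝕜] [NormedAddCommGroup E] [NormedSpace 𝕜 E] {T : E →L[𝕜] E}
    (hT : IsUnit T) {C : ℝ} (hC : 0 ≤ C) (h : ∀ x, ‖x‖ ≤ C * ‖T x‖) :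
    ‖Ring.inverse T‖ ≤ C := by
  obtain ⟨u, rfl⟩ := hT
  rw [Ring.inverse_unit]
  refine opNorm_le_bound _ hC fun y => ?_
  have := h ((↑u⁻¹ : E →L[𝕜] E) y)
  rwa [← mul_apply_eq_comp, u.mul_inv, one_apply_eq_self] at this

variable {H : Type*} [NormedAddCommGroup H] [InnerProductSpace ℂ H]

theorem IsPositive.norm_le_mul_norm_smul_sub_one_apply {S : H →L[ℂ] H} (hS : S.IsPositive)
    {l : ℂ} (hl : l.im ≠ 0) (x : H) : ‖x‖ ≤ (1 + ‖l‖ / |l.im|) * ‖(l • S - 1) x‖ := by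
  set y := (l • S - 1) x
  obtain ⟨s, hs0, hs⟩ := RCLike.nonneg_iff_exists_ofReal.mp (hS.inner_nonneg_right x)
  have hw : inner ℂ x y = l * s - ((‖x‖ ^ 2 : ℝ) : ℂ) := by simp [y, ← hs]
  have hxy : ‖inner ℂ x y‖ ≤ ‖x‖ * ‖y‖ := norm_inner_le_norm x y
  have him : |l.im| * s ≤ ‖x‖ * ‖y‖ := by
    calc |l.im| * s = |(inner ℂ x y).im| := by
          rw [hw, sub_im, ofReal_im, mul_im, ofReal_re, ofReal_im]
          simp [abs_mul, abs_of_nonneg hs0]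
      _ ≤ ‖x‖ * ‖y‖ := (abs_im_le_norm _).trans hxy
  have hre : ‖x‖ ^ 2 ≤ ‖l‖ * s + ‖x‖ * ‖y‖ := by
    calc ‖x‖ ^ 2 = ‖l * s - inner ℂ x y‖ := by simp [hw]
      _ ≤ ‖l * s‖ + ‖inner ℂ x y‖ := norm_sub_le _ _
      _ ≤ ‖l‖ * s + ‖x‖ * ‖y‖ := by
        rw [norm_mul, norm_real, Real.norm_of_nonneg hs0]; gcongr
  have hpos : 0 < |l.im| := abs_pos.mpr hl
  rcases (norm_nonneg x).eq_or_lt with h0 | h0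
  · rw [← h0]; positivity
  rw [← mul_le_mul_iff_of_pos_left (mul_pos hpos h0)]
  calc |l.im| * ‖x‖ * ‖x‖ ≤ (|l.im| + ‖l‖) * (‖x‖ * ‖y‖) := by
        nlinarith [mul_le_mul_of_nonneg_left hre hpos.le,
          mul_le_mul_of_nonneg_left him (norm_nonneg l)]
    _ = _ := by field_simp

theorem IsPositive.norm_ring_inverse_smul_sub_one_le [CompleteSpace H] {S : H →L[ℂ] H}
    (hS : S.IsPositive) {l : ℂ} (hl : l.im ≠ 0) :
    ‖Ring.inverse (l • S - 1)‖ ≤ 1 + ‖l‖ / |l.im| :=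
  norm_ring_inverse_le_of_norm_le_mul_norm_apply
    (hS.isSelfAdjoint.isUnit_smul_sub_one_of_im_ne_zero hl) (by positivity)
    (hS.norm_le_mul_norm_smul_sub_one_apply hl)

end ContinuousLinearMap

theorem IsSelfAdjoint.isPositive_sq {H : Type*} [NormedAddCommGroup H] [InnerProductSpace ℂ H]
    [CompleteSpace H] {T : H →L[ℂ] H} (hT : IsSelfAdjoint T) : (T ^ 2).IsPositive := by
  simpa [hT.adjoint_eq, sq, ContinuousLinearMap.mul_def] using T.isPositive_adjoint_comp_self

theorem tendsto_arg_ofReal_add_mul_I (ε : ℝ) :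
    Tendsto (fun t : ℝ => arg (t + ε * I)) atTop (𝓝 0) := by
  have h1 : Tendsto (fun t : ℝ => 1 + ((ε / t : ℝ) : ℂ) * I) atTop (𝓝 1) := by
    simpa using ((tendsto_const_nhds.div_atTop tendsto_id).ofReal.mul_const I).const_add (1 : ℂ)
  have h2 := (continuousAt_arg (by simp : (1 : ℂ) ∈ slitPlane)).tendsto.comp h1
  rw [arg_one] at h2
  refine h2.congr' ?_
  filter_upwards [eventually_gt_atTop 0] with t ht
  rw [Function.comp_apply, ← arg_real_mul _ ht]
  have ht' : (t : ℂ) ≠ 0 := ofReal_ne_zero.mpr ht.ne'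
  push_cast
  field_simp

theorem eventually_le_re_cpow_ofReal_add_mul_I (ε : ℝ) {k : ℝ} (hk : 0 ≤ k) :
    ∀ᶠ t : ℝ in atTop, t ^ k / 2 ≤ (((t : ℂ) + ε * I) ^ (k : ℂ)).re := by
  have hcos : ∀ᶠ t : ℝ in atTop, 1 / 2 < Real.cos (arg (t + ε * I) * k) := by
    have := (Real.continuous_cos.tendsto _).comp ((tendsto_arg_ofReal_add_mul_I ε).mul_const k)
    simp only [zero_mul, Real.cos_zero] at this
    exact this.eventually_const_lt (by norm_num)
  filter_upwards [hcos, eventually_ge_atTop 0] with t hcos ht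
  have hnorm : t ≤ ‖(t : ℂ) + ε * I‖ := by
    simpa [abs_of_nonneg ht] using abs_re_le_norm ((t : ℂ) + ε * I)
  rw [cpow_ofReal_re]
  have := Real.rpow_le_rpow ht hnorm hk
  nlinarith [Real.rpow_nonneg ht k]

theorem norm_cpow_mul_exp_neg_mul_cpow (l : ℂ) (c b k : ℝ) :
    ‖l ^ (c : ℂ) * exp (-(b : ℂ) * l ^ (k : ℂ))‖ =
      ‖l‖ ^ c * Real.exp (-b * (l ^ (k : ℂ)).re) := by
  simp [norm_cpow_real, norm_exp]

theorem integrableOn_comp_neg_Iic {E : Type*} [NormedAddCommGroup E] {f : ℝ → E} {a : ℝ}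
    (h : IntegrableOn f (Set.Ici a)) : IntegrableOn (fun t => f (-t)) (Set.Iic (-a)) := by
  simpa [Function.comp_def] using
    ((Measure.measurePreserving_neg volume).integrableOn_comp_preimage
      (Homeomorph.neg ℝ).measurableEmbedding).2 h

section ContourIntegrand

variable {H : Type*} [NormedAddCommGroup H] [InnerProductSpace ℂ H] [CompleteSpace H]

theorem continuousAt_contourIntegrand (T : H →L[ℂ] H) (c b k : ℝ) {l : ℂ}
    (hl : l ∈ slitPlane) (hu : IsUnit (l • T ^ 2 - 1)) :
    ContinuousAt (contourIntegrand T c b k) l := by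
  have hinv : ContinuousAt Ring.inverse (l • T ^ 2 - 1) :=
    hu.unit_spec ▸ NormedRing.inverse_continuousAt hu.unit
  unfold contourIntegrand
  fun_prop (disch := assumption)

theorem continuous_contourIntegrand_comp (T : H →L[ℂ] H) (c b k : ℝ) {γ : ℝ → ℂ}
    (hγ : Continuous γ) (hsl : ∀ t, γ t ∈ slitPlane) (hu : ∀ t, IsUnit (γ t • T ^ 2 - 1)) :
    Continuous fun t => contourIntegrand T c b k (γ t) :=
  continuous_iff_continuousAt.2 fun t =>
    (continuousAt_contourIntegrand T c b k (hsl t) (hu t)).comp hγ.continuousAt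

theorem norm_contourIntegrand_le {T : H →L[ℂ] H} (hT : IsSelfAdjoint T) (c b k : ℝ) {l : ℂ}
    (hl : l.im ≠ 0) :
    ‖contourIntegrand T c b k l‖ ≤
      ‖l‖ ^ c * Real.exp (-b * (l ^ (k : ℂ)).re) * (‖T‖ ^ 2 * (1 + ‖l‖ / |l.im|)) := by
  rw [contourIntegrand, norm_smul, norm_cpow_mul_exp_neg_mul_cpow]
  gcongr
  calc ‖T ^ 2 * Ring.inverse (l • T ^ 2 - 1)‖ ≤ ‖T ^ 2‖ * ‖Ring.inverse (l • T ^ 2 - 1)‖ :=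
        norm_mul_le _ _
    _ ≤ ‖T‖ ^ 2 * (1 + ‖l‖ / |l.im|) := by
      gcongr
      · exact norm_pow_le' T two_pos
      · exact hT.isPositive_sq.norm_ring_inverse_smul_sub_one_le hl

theorem isBigO_contourIntegrand_ofReal_add_mul_I {T : H →L[ℂ] H} (hT : IsSelfAdjoint T)
    (c : ℝ) {b k ε : ℝ} (hb : 0 ≤ b) (hk : 0 ≤ k) (hε : ε ≠ 0) :
    (fun t : ℝ => contourIntegrand T c b k (t + ε * I)) =O[atTop]
      fun t => t ^ (|c| + 1) * Real.exp (-(b / 2) * t ^ k) := by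
  refine .of_bound (2 ^ |c| * ‖T‖ ^ 2 * (1 + 2 / |ε|)) ?_
  filter_upwards [eventually_le_re_cpow_ofReal_add_mul_I ε hk, eventually_ge_atTop 1,
    eventually_ge_atTop |ε|] with t hre ht1 htε
  set l : ℂ := t + ε * I
  have hl_im : l.im = ε := by simp [l]
  have hlow : t ≤ ‖l‖ := by
    simpa [l, abs_of_nonneg (zero_le_one.trans ht1)] using abs_re_le_norm l
  have hup : ‖l‖ ≤ 2 * t := by
    calc ‖l‖ ≤ ‖(t : ℂ)‖ + ‖(ε : ℂ) * I‖ := norm_add_le _ _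
      _ = t + |ε| := by simp [abs_of_nonneg (zero_le_one.trans ht1)]
      _ ≤ 2 * t := by linarith
  have hpow : ‖l‖ ^ c ≤ 2 ^ |c| * t ^ |c| := by
    calc ‖l‖ ^ c ≤ ‖l‖ ^ |c| :=
          Real.rpow_le_rpow_of_exponent_le (ht1.trans hlow) (le_abs_self c)
      _ ≤ (2 * t) ^ |c| := Real.rpow_le_rpow (norm_nonneg _) hup (abs_nonneg c)
      _ = 2 ^ |c| * t ^ |c| := Real.mul_rpow zero_le_two (by linarith)
  have hexp : Real.exp (-b * (l ^ (k : ℂ)).re) ≤ Real.exp (-(b / 2) * t ^ k) := by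
    rw [Real.exp_le_exp]; nlinarith
  have hres : ‖T‖ ^ 2 * (1 + ‖l‖ / |l.im|) ≤ ‖T‖ ^ 2 * (1 + 2 / |ε|) * t := by
    rw [hl_im, mul_assoc]
    refine mul_le_mul_of_nonneg_left ?_ (by positivity)
    calc 1 + ‖l‖ / |ε| ≤ t + 2 * t / |ε| := by gcongr
      _ = (1 + 2 / |ε|) * t := by ring
  rw [Real.norm_of_nonneg (by positivity), Real.rpow_add_one (by linarith)]
  calc _ ≤ _ := norm_contourIntegrand_le hT c b k (hl_im ▸ hε)
    _ ≤ 2 ^ |c| * t ^ |c| * Real.exp (-(b / 2) * t ^ k) * (‖T‖ ^ 2 * (1 + 2 / |ε|) * t) := by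
      gcongr
    _ = _ := by ring

theorem integrableOn_contourIntegrand_ofReal_add_mul_I {T : H →L[ℂ] H} (hT : IsSelfAdjoint T)
    (c : ℝ) {b k ε : ℝ} (hb : 0 < b) (hk : 0 < k) (hε : ε ≠ 0) (a : ℝ) :
    IntegrableOn (fun t : ℝ => contourIntegrand T c b k (t + ε * I)) (Set.Ici a) := by
  have hcont := continuous_contourIntegrand_comp T c b k (γ := fun t : ℝ => t + ε * I)
    (by fun_prop) (fun t => mem_slitPlane_iff.2 (.inr (by simpa using hε))) fun t =>
      (hT.pow 2).isUnit_smul_sub_one_of_im_ne_zero (by simpa using hε)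
  refine (hcont.continuousOn.locallyIntegrableOn measurableSet_Ici).integrableOn_of_isBigO_atTop
    (isBigO_contourIntegrand_ofReal_add_mul_I hT c hb.le hk.le hε) ⟨Set.Ioi 0, Ioi_mem_atTop 0,
      integrableOn_rpow_mul_exp_neg_mul_rpow (by linarith [abs_nonneg c]) hk (by positivity)⟩

end ContourIntegrand

theorem statement17_general {H : Type*} [NormedAddCommGroup H] [InnerProductSpace ℂ H]
    [CompleteSpace H] (T : H →L[ℂ] H) (hT : IsSelfAdjoint T) (a c b k : ℝ)
    (ha : 0 < a) (haT : a * ‖T‖ ^ 2 < 1) (hb : 0 < b) (hk : 0 < k) :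
    (∀ t : ℝ, t ≤ -a → IsUnit (((-t : ℂ) + Complex.I) • T ^ 2 - 1)) ∧
    (∀ t : ℝ, t ∈ Set.Icc (-1 : ℝ) 1 →
      IsUnit (((a : ℂ) - (t : ℂ) * Complex.I) • T ^ 2 - 1)) ∧
    (∀ t : ℝ, a ≤ t → IsUnit (((t : ℂ) - Complex.I) • T ^ 2 - 1)) ∧
    IntegrableOn (fun t : ℝ => contourIntegrand T c b k ((-t : ℂ) + Complex.I))
      (Set.Iic (-a)) ∧
    IntegrableOn (fun t : ℝ => contourIntegrand T c b k ((a : ℂ) - (t : ℂ) * Complex.I))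
      (Set.Icc (-1 : ℝ) 1) ∧
    IntegrableOn (fun t : ℝ => contourIntegrand T c b k ((t : ℂ) - Complex.I))
      (Set.Ici a) := by
  have hunit_of_im : ∀ l : ℂ, l.im ≠ 0 → IsUnit (l • T ^ 2 - 1) := fun l =>
    (hT.pow 2).isUnit_smul_sub_one_of_im_ne_zero
  have hunit₂ : ∀ t : ℝ, IsUnit (((a : ℂ) - t * I) • T ^ 2 - 1) := by
    intro t
    rcases eq_or_ne t 0 with rfl | ht
    · refine isUnit_smul_sub_one_of_norm_mul_lt ?_
      simpa [abs_of_pos ha] using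
        (mul_le_mul_of_nonneg_left (norm_pow_le' T two_pos) ha.le).trans_lt haT
    · exact hunit_of_im _ (by simpa using ht)
  refine ⟨fun t _ => hunit_of_im _ (by simp), fun t _ => hunit₂ t,
    fun t _ => hunit_of_im _ (by simp), ?_, ?_, ?_⟩
  · simpa using integrableOn_comp_neg_Iic
      (integrableOn_contourIntegrand_ofReal_add_mul_I hT c hb hk one_ne_zero a)
  · refine (continuous_contourIntegrand_comp T c b k (by fun_prop) (fun t => ?_)
      hunit₂).continuousOn.integrableOn_compact isCompact_Icc
    exact mem_slitPlane_iff.2 (.inl (by simpa using ha))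
  · simpa [sub_eq_add_neg] using
      integrableOn_contourIntegrand_ofReal_add_mul_I hT c hb hk (neg_ne_zero.2 one_ne_zero) a

/-- Lemma C.2: for a bounded self-adjoint `T` on a complex Hilbert space,
`a > 0` with `a‖T‖² < 1`, `c ≥ 0`, `b > 0`, `k > 0`: for every `λ` on the contour
`σ = σ₁ + σ₂ + σ₃` (with `σ₁ t = -t + i` for `t ≤ -a`, `σ₂ t = a - t i` for `t ∈ [-1,1]`,
`σ₃ t = t - i` for `t ≥ a`) the operator `λ T² - 1` is invertible, and
`λ ↦ T² (λT² - 1)⁻¹ λ^c exp (-bλ^k)` is Bochner integrable along each parametrized piece. -/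
theorem statement17 {H : Type*} [NormedAddCommGroup H] [InnerProductSpace ℂ H]
    [CompleteSpace H] (T : H →L[ℂ] H) (hT : IsSelfAdjoint T) (a c b k : ℝ)
    (ha : 0 < a) (haT : a * ‖T‖ ^ 2 < 1) (hc : 0 ≤ c) (hb : 0 < b) (hk : 0 < k) :
    (∀ t : ℝ, t ≤ -a → IsUnit (((-t : ℂ) + Complex.I) • T ^ 2 - 1)) ∧
    (∀ t : ℝ, t ∈ Set.Icc (-1 : ℝ) 1 →
      IsUnit (((a : ℂ) - (t : ℂ) * Complex.I) • T ^ 2 - 1)) ∧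
    (∀ t : ℝ, a ≤ t → IsUnit (((t : ℂ) - Complex.I) • T ^ 2 - 1)) ∧
    IntegrableOn (fun t : ℝ => contourIntegrand T c b k ((-t : ℂ) + Complex.I))
      (Set.Iic (-a)) ∧
    IntegrableOn (fun t : ℝ => contourIntegrand T c b k ((a : ℂ) - (t : ℂ) * Complex.I))
      (Set.Icc (-1 : ℝ) 1) ∧
    IntegrableOn (fun t : ℝ => contourIntegrand T c b k ((t : ℂ) - Complex.I))
      (Set.Ici a) :=
  statement17_general T hT a c b k ha haT hb hk
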